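/- Fix z ∈ ℝ. For every x < z, the derivative of Stein's solution is nonnegative: f_z′(x) ≥ 0. -/

import Mathlib

open MeasureTheory

/-- The standard normal tail function `Φ̄(u) = (1/√(2π)) ∫_u^∞ e^{-x²/2} dx`. -/
noncomputable def gaussTail (u : ℝ) : ℝ :=
  (Real.sqrt (2 * Real.pi))⁻¹ * ∫ x in Set.Ioi u, Real.exp (-x ^ 2 / 2)

/-- Stein's solution `f_z` of Stein's equation for the test function `h = 1_{(-∞,z]}`. -/
noncomputable def steinSol (z x : ℝ) : ℝ :=
  if x ≤ z then
    Real.sqrt (2 * Real.pi) * Real.exp (x ^ 2 / 2) * (1 - gaussTail x) * gaussTail z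
  else
    Real.sqrt (2 * Real.pi) * Real.exp (x ^ 2 / 2) * (1 - gaussTail z) * gaussTail x

open Set Real Filter

lemma integrable_g : Integrable (fun x : ℝ => Real.exp (-x ^ 2 / 2)) := by
  have h := integrable_exp_neg_mul_sq (show (0:ℝ) < 1/2 by norm_num)
  refine h.congr (Filter.Eventually.of_forall fun x => ?_)
  ring_nf

lemma continuous_g : Continuous (fun x : ℝ => Real.exp (-x ^ 2 / 2)) := by
  continuity

lemma sqrt_two_pi_pos : 0 < Real.sqrt (2 * Real.pi) :=
  Real.sqrt_pos.2 (by positivity)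

lemma integral_g : (∫ x : ℝ, Real.exp (-x ^ 2 / 2)) = Real.sqrt (2 * Real.pi) := by
  have h := integral_gaussian (1/2)
  rw [show Real.pi / (1/2) = 2 * Real.pi by ring] at h
  rw [← h]
  congr 1 with x
  ring_nf

lemma hasDerivAt_gaussTail (u : ℝ) :
    HasDerivAt gaussTail (-((Real.sqrt (2 * Real.pi))⁻¹ * Real.exp (-u ^ 2 / 2))) u := by
  have hfun : gaussTail = fun u : ℝ =>
      (Real.sqrt (2 * Real.pi))⁻¹ *
        ((∫ x in Ioi (0:ℝ), Real.exp (-x ^ 2 / 2)) - ∫ x in (0:ℝ)..u, Real.exp (-x ^ 2 / 2)) := by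
    funext v
    unfold gaussTail
    congr 1
    have h1 : ((∫ x in Iic v, Real.exp (-x ^ 2 / 2)) - ∫ x in Iic (0:ℝ), Real.exp (-x ^ 2 / 2))
        = ∫ x in (0:ℝ)..v, Real.exp (-x ^ 2 / 2) :=
      intervalIntegral.integral_Iic_sub_Iic integrable_g.integrableOn integrable_g.integrableOn
    have h2 := intervalIntegral.integral_Iic_add_Ioi (b := v) (f := fun x : ℝ => Real.exp (-x ^ 2 / 2))
      integrable_g.integrableOn integrable_g.integrableOn
    have h3 := intervalIntegral.integral_Iic_add_Ioi (b := (0:ℝ)) (f := fun x : ℝ => Real.exp (-x ^ 2 / 2))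
      integrable_g.integrableOn integrable_g.integrableOn
    linarith
  rw [hfun]
  have hd : HasDerivAt (fun v : ℝ => ∫ x in (0:ℝ)..v, Real.exp (-x ^ 2 / 2))
      (Real.exp (-u ^ 2 / 2)) u := by
    exact intervalIntegral.integral_hasDerivAt_right integrable_g.intervalIntegrable
      (continuous_g.stronglyMeasurable.stronglyMeasurableAtFilter)
      continuous_g.continuousAt
  have := ((hasDerivAt_const u (∫ x in Ioi (0:ℝ), Real.exp (-x ^ 2 / 2))).sub hd).const_mul
    (Real.sqrt (2 * Real.pi))⁻¹
  simpa using this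

lemma gaussTail_nonneg (u : ℝ) : 0 ≤ gaussTail u := by
  apply mul_nonneg (by positivity)
  exact setIntegral_nonneg measurableSet_Ioi fun x _ => (Real.exp_pos _).le

lemma gaussTail_le_one (u : ℝ) : gaussTail u ≤ 1 := by
  unfold gaussTail
  rw [inv_mul_le_iff₀ sqrt_two_pi_pos, mul_one, ← integral_g]
  exact setIntegral_le_integral integrable_g
    (Filter.Eventually.of_forall fun x => (Real.exp_pos _).le)

lemma mills (t : ℝ) (ht : 0 < t) :
    (∫ x in Ioi t, Real.exp (-x ^ 2 / 2)) ≤ Real.exp (-t ^ 2 / 2) / t := by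
  have hint : IntegrableOn (fun x : ℝ => x / t * Real.exp (-x ^ 2 / 2)) (Ioi t) := by
    have h := integrable_mul_exp_neg_mul_sq (show (0:ℝ) < 1/2 by norm_num)
    have h2 : Integrable (fun x : ℝ => x / t * Real.exp (-x ^ 2 / 2)) := by
      have := h.const_mul t⁻¹
      refine this.congr (Filter.Eventually.of_forall fun x => ?_)
      ring_nf
    exact h2.integrableOn
  have key : (∫ x in Ioi t, x / t * Real.exp (-x ^ 2 / 2)) = Real.exp (-t ^ 2 / 2) / t := by
    have hderiv : ∀ x ∈ Ici t, HasDerivAt (fun x : ℝ => -(Real.exp (-x ^ 2 / 2) / t))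
        (x / t * Real.exp (-x ^ 2 / 2)) x := by
      intro x _
      have h1 : HasDerivAt (fun x : ℝ => -x ^ 2 / 2) (-x) x := by
        have := ((hasDerivAt_pow 2 x).neg).div_const 2
        simpa using this.congr_deriv (by ring)
      have := ((h1.exp).div_const t).neg
      refine this.congr_deriv ?_
      ring
    have htend : Tendsto (fun x : ℝ => -(Real.exp (-x ^ 2 / 2) / t)) atTop (nhds 0) := by
      have h0 : Tendsto (fun x : ℝ => x ^ 2 / 2) atTop atTop :=
        (tendsto_pow_atTop two_ne_zero).atTop_div_const (by norm_num)
      have : Tendsto (fun x : ℝ => -x ^ 2 / 2) atTop atBot := by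
        simpa [neg_div] using tendsto_neg_atBot_iff.mpr h0
      have h2 := (Real.tendsto_exp_atBot.comp this).div_const t
      simpa using h2.neg
    have := integral_Ioi_of_hasDerivAt_of_tendsto' hderiv hint htend
    rw [this]
    ring
  rw [← key]
  apply setIntegral_mono_on integrable_g.integrableOn hint measurableSet_Ioi
  intro x hx
  rw [mem_Ioi] at hx
  have h1 : (1:ℝ) ≤ x / t := (one_le_div ht).2 hx.le
  nth_rewrite 1 [← one_mul (Real.exp (-x ^ 2 / 2))]
  exact mul_le_mul_of_nonneg_right h1 (Real.exp_pos _).le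

lemma one_sub_gaussTail (u : ℝ) :
    1 - gaussTail u = (Real.sqrt (2 * Real.pi))⁻¹ * ∫ x in Iic u, Real.exp (-x ^ 2 / 2) := by
  have h2 := intervalIntegral.integral_Iic_add_Ioi (b := u) (f := fun x : ℝ => Real.exp (-x ^ 2 / 2))
    integrable_g.integrableOn integrable_g.integrableOn
  unfold gaussTail
  rw [integral_g] at h2
  have hs := sqrt_two_pi_pos.ne'
  have h4 : (Real.sqrt (2 * Real.pi))⁻¹ * ((∫ x in Iic u, Real.exp (-x ^ 2 / 2)) +
      ∫ x in Ioi u, Real.exp (-x ^ 2 / 2)) = 1 := by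
    rw [h2]; exact inv_mul_cancel₀ hs
  rw [mul_add] at h4
  linarith

/-- For `x < z`, the derivative of Stein's solution is nonnegative. -/
theorem stein_deriv_nonneg_left (z : ℝ) :
    ∀ x : ℝ, x < z → 0 ≤ deriv (steinSol z) x := by
  intro x hx
  -- locally, steinSol z equals the first branch
  have hev : steinSol z =ᶠ[nhds x] fun y =>
      Real.sqrt (2 * Real.pi) * (Real.exp (y ^ 2 / 2) * (1 - gaussTail y)) * gaussTail z := by
    filter_upwards [Iio_mem_nhds hx] with y hy
    have hyz : y ≤ z := (mem_Iio.mp hy).le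
    simp only [steinSol, if_pos hyz]
    ring
  rw [Filter.EventuallyEq.deriv_eq hev]
  -- compute the derivative of the first branch
  have h1 : HasDerivAt (fun y : ℝ => Real.exp (y ^ 2 / 2)) (x * Real.exp (x ^ 2 / 2)) x := by
    have hq : HasDerivAt (fun y : ℝ => y ^ 2 / 2) x x := by
      have := (hasDerivAt_pow 2 x).div_const 2
      simpa using this.congr_deriv (by ring)
    simpa [mul_comm] using hq.exp
  have h2 : HasDerivAt (fun y : ℝ => 1 - gaussTail y)
      ((Real.sqrt (2 * Real.pi))⁻¹ * Real.exp (-x ^ 2 / 2)) x := by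
    have := (hasDerivAt_const x (1:ℝ)).sub (hasDerivAt_gaussTail x)
    exact this.congr_deriv (by ring)
  have h3 := ((h1.mul h2).const_mul (Real.sqrt (2 * Real.pi))).mul_const (gaussTail z)
  rw [(show HasDerivAt (fun y => Real.sqrt (2 * Real.pi) * (Real.exp (y ^ 2 / 2) * (1 - gaussTail y)) * gaussTail z) _ x from h3).deriv]
  have hs : Real.sqrt (2 * Real.pi) * (Real.sqrt (2 * Real.pi))⁻¹ = 1 :=
    mul_inv_cancel₀ sqrt_two_pi_pos.ne'
  have hexp : Real.exp (x ^ 2 / 2) * Real.exp (-x ^ 2 / 2) = 1 := by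
    rw [← Real.exp_add]; ring_nf; exact Real.exp_zero
  have hval : Real.sqrt (2 * Real.pi) *
      (x * Real.exp (x ^ 2 / 2) * (1 - gaussTail x) +
        Real.exp (x ^ 2 / 2) * ((Real.sqrt (2 * Real.pi))⁻¹ * Real.exp (-x ^ 2 / 2)))
      = Real.sqrt (2 * Real.pi) * x * Real.exp (x ^ 2 / 2) * (1 - gaussTail x) + 1 := by
    have : Real.sqrt (2 * Real.pi) * (Real.exp (x ^ 2 / 2) *
        ((Real.sqrt (2 * Real.pi))⁻¹ * Real.exp (-x ^ 2 / 2))) = 1 := by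
      calc Real.sqrt (2 * Real.pi) * (Real.exp (x ^ 2 / 2) *
          ((Real.sqrt (2 * Real.pi))⁻¹ * Real.exp (-x ^ 2 / 2)))
          = (Real.sqrt (2 * Real.pi) * (Real.sqrt (2 * Real.pi))⁻¹) *
            (Real.exp (x ^ 2 / 2) * Real.exp (-x ^ 2 / 2)) := by ring
        _ = 1 := by rw [hs, hexp, one_mul]
    rw [mul_add, this]; ring
  rw [hval]
  apply mul_nonneg _ (gaussTail_nonneg z)
  -- show the factor is nonnegative
  rcases le_or_gt 0 x with hx0 | hx0
  · have : 0 ≤ Real.sqrt (2 * Real.pi) * x * Real.exp (x ^ 2 / 2) * (1 - gaussTail x) := by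
      apply mul_nonneg (by positivity)
      linarith [gaussTail_le_one x]
    linarith
  · -- x < 0 : use Mills' ratio bound with t = -x
    set t := -x with hts
    have ht : 0 < t := by simp [hts]; linarith
    have hsym : (∫ s in Iic x, Real.exp (-s ^ 2 / 2)) = ∫ s in Ioi t, Real.exp (-s ^ 2 / 2) := by
      rw [show (Ioi t) = Ioi (-x) from by rw [hts]]
      rw [← integral_comp_neg_Iic]
      congr 1 with s
      ring_nf
    have hbound : 1 - gaussTail x ≤ (Real.sqrt (2 * Real.pi))⁻¹ * (Real.exp (-t ^ 2 / 2) / t) := by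
      rw [one_sub_gaussTail, hsym]
      exact mul_le_mul_of_nonneg_left (mills t ht) (by positivity)
    have hx2 : x ^ 2 = t ^ 2 := by rw [hts]; ring
    have hkey : Real.sqrt (2 * Real.pi) * t * Real.exp (t ^ 2 / 2) * (1 - gaussTail x) ≤ 1 := by
      calc Real.sqrt (2 * Real.pi) * t * Real.exp (t ^ 2 / 2) * (1 - gaussTail x)
          ≤ Real.sqrt (2 * Real.pi) * t * Real.exp (t ^ 2 / 2) *
            ((Real.sqrt (2 * Real.pi))⁻¹ * (Real.exp (-t ^ 2 / 2) / t)) := by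
            apply mul_le_mul_of_nonneg_left hbound (by positivity)
        _ = (Real.sqrt (2 * Real.pi) * (Real.sqrt (2 * Real.pi))⁻¹) *
            (Real.exp (t ^ 2 / 2) * Real.exp (-t ^ 2 / 2)) * (t / t) := by ring
        _ = 1 := by
            rw [hs, div_self ht.ne', one_mul, mul_one, ← Real.exp_add]
            ring_nf
            exact Real.exp_zero
    have heq : Real.sqrt (2 * Real.pi) * x * Real.exp (x ^ 2 / 2) * (1 - gaussTail x)
        = -(Real.sqrt (2 * Real.pi) * t * Real.exp (t ^ 2 / 2) * (1 - gaussTail x)) := by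
      rw [hx2, hts]; ring
    rw [heq]
    linarith
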